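/- Let d ≥ 1, let 0 < ε ≤ 1/ε ≤ K, and let f, g : ℝ^d → ℝ be smooth with g compactly supported. Suppose |∇f(ξ)| ≥ 1 for all ξ ∈ supp g, and for every integer L′ ≥ 2 there is a constant C_{L′} with |∇^{L′} f(ξ)| ≤ C_{L′} ε^{1−L′} on supp g. Then for every integer L ≥ 1, |∫_{ℝ^d} e^{iKf(ξ)} g(ξ) dξ| ≲_{d,L} (Kε)^{−L} Σ_{l=0}^{L} ε^l ‖∇^l g‖_{L¹(ℝ^d)}, with an implicit constant depending only on d, L and the constants C_{L′}. -/

import Mathlib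

/-!
Common framework: functions on the torus `𝕋_R = (ℝ/Rℤ)²` are modelled as
`R`-periodic functions on `ℝ²`; Fourier multipliers are defined through the
Fourier coefficients on the frequency lattice `(2πℤ/R)²`.
-/

noncomputable section

open MeasureTheory Real Set
open scoped ENNReal NNReal

abbrev T2 : Type := ℝ × ℝ

namespace EP

/-- Euclidean dot product on ℝ². -/
def dot2 (x y : T2) : ℝ := x.1 * y.1 + x.2 * y.2

/-- Euclidean norm on ℝ². -/
def en (x : T2) : ℝ := Real.sqrt (dot2 x x)

/-- A point of the lattice (Rℤ)². -/
def lat (R : ℝ) (k : ℤ × ℤ) : T2 := (R * (k.1 : ℝ), R * (k.2 : ℝ))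

/-- A point of the frequency lattice (2πℤ/R)². -/
def freq (R : ℝ) (k : ℤ × ℤ) : T2 := (2 * π * (k.1 : ℝ) / R, 2 * π * (k.2 : ℝ) / R)

/-- R-periodicity (function on the torus of size R). -/
def PeriodicC (R : ℝ) (u : T2 → ℂ) : Prop := ∀ (x : T2) (k : ℤ × ℤ), u (x + lat R k) = u x

def PeriodicR (R : ℝ) (u : T2 → ℝ) : Prop := ∀ (x : T2) (k : ℤ × ℤ), u (x + lat R k) = u x

/-- A fundamental domain for the torus. -/
def box (R : ℝ) : Set T2 := Ioc (0:ℝ) R ×ˢ Ioc (0:ℝ) R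

/-- Lebesgue measure on the fundamental domain. -/
def μbox (R : ℝ) : Measure T2 := volume.restrict (box R)

/-- Fourier coefficient û(ξ) at ξ = freq R k. -/
def fCoeff (R : ℝ) (u : T2 → ℂ) (k : ℤ × ℤ) : ℂ :=
  ∫ x in box R, u x * Complex.exp (-Complex.I * ((dot2 x (freq R k) : ℝ) : ℂ))

/-- Fourier multiplier with symbol m. -/
def op (R : ℝ) (m : T2 → ℂ) (u : T2 → ℂ) : T2 → ℂ := fun x =>
  (1 / (R : ℂ) ^ 2) * ∑' k : ℤ × ℤ,
    m (freq R k) * fCoeff R u k * Complex.exp (Complex.I * ((dot2 x (freq R k) : ℝ) : ℂ))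

/-- L^p norm on the torus (valued in ℝ≥0∞). -/
def LpE (R : ℝ) (p : ℝ≥0∞) (u : T2 → ℂ) : ℝ≥0∞ := eLpNorm u p (μbox R)

/-- Λ(ξ) = √(1+|ξ|²). -/
def lam (ξ : T2) : ℝ := Real.sqrt (1 + dot2 ξ ξ)

/-- The operator Λ^s. -/
def lamPow (R : ℝ) (s : ℝ) (u : T2 → ℂ) : T2 → ℂ :=
  op R (fun ξ => ((lam ξ ^ s : ℝ) : ℂ)) u

/-- H^s norm: ‖Λ^s u‖_{L²}. -/
def HNe (R : ℝ) (s : ℝ) (u : T2 → ℂ) : ℝ≥0∞ := LpE R 2 (lamPow R s u)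

/-- Complexification of a real function. -/
def cf (u : T2 → ℝ) : T2 → ℂ := fun x => (u x : ℂ)

/-- |∇|^{-1} (acting as 0 on the zero frequency). -/
def invGrad (R : ℝ) (u : T2 → ℂ) : T2 → ℂ := op R (fun ξ => (((en ξ)⁻¹ : ℝ) : ℂ)) u

/-- |∇|. -/
def absGrad (R : ℝ) (u : T2 → ℂ) : T2 → ℂ := op R (fun ξ => ((en ξ : ℝ) : ℂ)) u

/-- Λ|∇|^{-1}. -/
def LamInvGrad (R : ℝ) (u : T2 → ℂ) : T2 → ℂ :=
  op R (fun ξ => ((lam ξ * (en ξ)⁻¹ : ℝ) : ℂ)) u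

/-- The linear propagator e^{itΛ}. -/
def flow (R : ℝ) (t : ℝ) (u : T2 → ℂ) : T2 → ℂ :=
  op R (fun ξ => Complex.exp (Complex.I * (t : ℂ) * ((lam ξ : ℝ) : ℂ))) u

/-- U = Λ|∇|^{-1}ρ + i|∇|h. -/
def Ufun (R : ℝ) (ρ h : T2 → ℝ) : T2 → ℂ := fun x =>
  LamInvGrad R (cf ρ) x + Complex.I * absGrad R (cf h) x

/-- Partial derivatives on ℝ². -/
def d1 (f : T2 → ℝ) (x : T2) : ℝ := fderiv ℝ f x ((1:ℝ), (0:ℝ))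
def d2 (f : T2 → ℝ) (x : T2) : ℝ := fderiv ℝ f x ((0:ℝ), (1:ℝ))
def grad2 (f : T2 → ℝ) (x : T2) : T2 := (d1 f x, d2 f x)
def div2 (v : T2 → T2) (x : T2) : ℝ := d1 (fun y => (v y).1) x + d2 (fun y => (v y).2) x
def lap2 (f : T2 → ℝ) (x : T2) : ℝ := d1 (d1 f) x + d2 (d2 f) x

/-- The Euler–Poisson system on the torus of size `R`, on the time interval `[0, T]`,
for an irrotational velocity `v = ∇h`: `ρ_t + ∇·((1+ρ)v) = 0`,
`v_t + (v·∇)v + ∇ρ = ∇φ`, `Δφ = ρ`, with charge neutrality and zero momentum. -/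
structure IsEPSol (R T : ℝ) (ρ h φp : ℝ → T2 → ℝ) : Prop where
  per_rho : ∀ t ∈ Icc (0:ℝ) T, PeriodicR R (ρ t)
  per_h : ∀ t ∈ Icc (0:ℝ) T, PeriodicR R (h t)
  per_phi : ∀ t ∈ Icc (0:ℝ) T, PeriodicR R (φp t)
  reg_rho : ∀ t ∈ Icc (0:ℝ) T, ContDiff ℝ 1 (ρ t)
  reg_h : ∀ t ∈ Icc (0:ℝ) T, ContDiff ℝ 2 (h t)
  reg_phi : ∀ t ∈ Icc (0:ℝ) T, ContDiff ℝ 2 (φp t)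
  reg_t_rho : ∀ t ∈ Icc (0:ℝ) T, ∀ x : T2, DifferentiableAt ℝ (fun s => ρ s x) t
  reg_t_v : ∀ t ∈ Icc (0:ℝ) T, ∀ x : T2,
    DifferentiableAt ℝ (fun s => (grad2 (h s) x).1) t ∧
    DifferentiableAt ℝ (fun s => (grad2 (h s) x).2) t
  cont_eq : ∀ t ∈ Icc (0:ℝ) T, ∀ x : T2,
    deriv (fun s => ρ s x) t + div2 (fun y => (1 + ρ t y) • grad2 (h t) y) x = 0
  mom_eq1 : ∀ t ∈ Icc (0:ℝ) T, ∀ x : T2,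
    deriv (fun s => (grad2 (h s) x).1) t
      + (grad2 (h t) x).1 * d1 (fun y => (grad2 (h t) y).1) x
      + (grad2 (h t) x).2 * d2 (fun y => (grad2 (h t) y).1) x
      + d1 (ρ t) x = d1 (φp t) x
  mom_eq2 : ∀ t ∈ Icc (0:ℝ) T, ∀ x : T2,
    deriv (fun s => (grad2 (h s) x).2) t
      + (grad2 (h t) x).1 * d1 (fun y => (grad2 (h t) y).2) x
      + (grad2 (h t) x).2 * d2 (fun y => (grad2 (h t) y).2) x
      + d2 (ρ t) x = d2 (φp t) x
  poisson_eq : ∀ t ∈ Icc (0:ℝ) T, ∀ x : T2, lap2 (φp t) x = ρ t x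
  neutral : ∀ t ∈ Icc (0:ℝ) T, (∫ x in box R, ρ t x) = 0
  zero_mom : ∀ t ∈ Icc (0:ℝ) T, (∫ x in box R, grad2 (h t) x) = (0 : T2)

/-- `U ∈ C([0,T], H^s)`: finiteness of the `H^s` norm and continuity in the `H^s` metric. -/
def ContHN (R : ℝ) (s T : ℝ) (U : ℝ → T2 → ℂ) : Prop :=
  (∀ t ∈ Icc (0:ℝ) T, HNe R s (U t) < ⊤) ∧
  (∀ t ∈ Icc (0:ℝ) T, ∀ ε : ℝ, 0 < ε → ∃ δ : ℝ, 0 < δ ∧ ∀ t' ∈ Icc (0:ℝ) T,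
    |t' - t| < δ → HNe R s (fun x => U t' x - U t x) < ENNReal.ofReal ε)

/-- `U ∈ C¹([0,T], H^s)`: differentiability in the `H^s` metric with continuous derivative. -/
def C1HN (R : ℝ) (s T : ℝ) (U : ℝ → T2 → ℂ) : Prop :=
  ∃ U' : ℝ → T2 → ℂ, ContHN R s T U' ∧
    ∀ t ∈ Icc (0:ℝ) T, ∀ ε : ℝ, 0 < ε → ∃ δ : ℝ, 0 < δ ∧ ∀ t' ∈ Icc (0:ℝ) T,
      t' ≠ t → |t' - t| < δ →
      HNe R s (fun x => (((t' - t : ℝ) : ℂ))⁻¹ * (U t' x - U t x) - U' t x)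
        < ENNReal.ofReal ε

/-- H^s norm of a vector field (sum over the two components). -/
def HNev (R : ℝ) (s : ℝ) (v : T2 → T2) : ℝ≥0∞ :=
  HNe R s (cf (fun x => (v x).1)) + HNe R s (cf (fun x => (v x).2))

/-- A smooth radial-type cutoff: 1 on B(0,2/3), 0 outside B(0,3/2), values in [0,1]. -/
def IsCutoff (φ : T2 → ℝ) : Prop :=
  ContDiff ℝ (⊤ : ℕ∞) φ ∧ (∀ x : T2, φ x ∈ Icc (0:ℝ) 1) ∧
  (∀ x : T2, en x ≤ 2/3 → φ x = 1) ∧ (∀ x : T2, (3:ℝ)/2 ≤ en x → φ x = 0)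

/-- φ_k(ξ) = φ(ξ/2^k) − φ(ξ/2^{k-1}). -/
def phiK (φ : T2 → ℝ) (k : ℤ) (ξ : T2) : ℝ :=
  φ ((2:ℝ) ^ (-k) • ξ) - φ ((2:ℝ) ^ (-(k-1)) • ξ)

/-- Littlewood–Paley projection P_k. -/
def PK (R : ℝ) (φ : T2 → ℝ) (k : ℤ) (u : T2 → ℂ) : T2 → ℂ :=
  op R (fun ξ => ((phiK φ k ξ : ℝ) : ℂ)) u

/-- P_{[a,b]} = Σ_{a ≤ k ≤ b} P_k. -/
def PKband (R : ℝ) (φ : T2 → ℝ) (a b : ℤ) (u : T2 → ℂ) : T2 → ℂ := fun x =>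
  ∑ j ∈ Finset.Icc a b, PK R φ j u x

/-- P_{≥0} = Σ_{k ≥ 0} P_k, i.e. the multiplier 1 − φ_{≤ -1}(ξ) = 1 − φ(2ξ). -/
def Pge0 (R : ℝ) (φ : T2 → ℝ) (u : T2 → ℂ) : T2 → ℂ :=
  op R (fun ξ => (((1 : ℝ) - φ ((2:ℝ) • ξ) : ℝ) : ℂ)) u

/-- k⁺ = max(k, 0). -/
def kplus (k : ℤ) : ℤ := max k 0

/-- The X norm: Σ_k 2^{Mk⁺} ‖P_k u‖_{L^∞}. -/
def XnormE (R : ℝ) (φ : T2 → ℝ) (M : ℕ) (u : T2 → ℂ) : ℝ≥0∞ :=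
  ∑' k : ℤ, ENNReal.ofReal ((2:ℝ) ^ ((M : ℤ) * kplus k)) * LpE R ⊤ (PK R φ k u)

/-- ‖x‖ = dist(x, (Rℤ)²). -/
def torusDist (R : ℝ) (x : T2) : ℝ := ⨅ k : ℤ × ℤ, en (x - lat R k)

/-- The Z norm: ‖(1+‖x‖)^{2/3} Λ^{M+2} u‖_{L²}. -/
def ZnormE (R : ℝ) (M : ℕ) (u : T2 → ℂ) : ℝ≥0∞ :=
  LpE R 2 (fun x => (((1 + torusDist R x) ^ ((2:ℝ)/3) : ℝ) : ℂ) * lamPow R ((M:ℝ) + 2) u x)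

def ZnormEv (R : ℝ) (M : ℕ) (v : T2 → T2) : ℝ≥0∞ :=
  ZnormE R M (cf (fun x => (v x).1)) + ZnormE R M (cf (fun x => (v x).2))

/-- ‖U‖_{L²([0,t]) X}. -/
def L2X (R : ℝ) (φ : T2 → ℝ) (M : ℕ) (t : ℝ) (U : ℝ → T2 → ℂ) : ℝ≥0∞ :=
  (∫⁻ s in Icc (0:ℝ) t, (XnormE R φ M (U s)) ^ 2) ^ ((1:ℝ)/2)

/-- Fourier coefficient in x of a symbol a(x,ζ). -/
def symCoeff (R : ℝ) (a : T2 → T2 → ℂ) (k : ℤ × ℤ) (ζ : T2) : ℂ :=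
  ∫ x in box R, a x ζ * Complex.exp (-Complex.I * ((dot2 x (freq R k) : ℝ) : ℂ))

/-- φ_{≤-10}(|ξ−η|/|ξ+η|), taken to be 0 when ξ+η = 0. -/
def cutRatio (φ : T2 → ℝ) (ξ η : T2) : ℝ :=
  if ξ + η = (0 : T2) then 0
  else φ ((((2:ℝ) ^ (10 : ℕ) * en (ξ - η) / en (ξ + η) : ℝ), (0:ℝ)) : T2)

/-- The (Weyl-quantized) paradifferential operator T_a. -/
def Ta (R : ℝ) (φ : T2 → ℝ) (a : T2 → T2 → ℂ) (f : T2 → ℂ) : T2 → ℂ := fun x =>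
  (1 / (R : ℂ) ^ 2) * ∑' ξi : ℤ × ℤ,
    ((1 / (R : ℂ) ^ 2) * ∑' ηi : ℤ × ℤ,
      ((cutRatio φ (freq R ξi) (freq R ηi) : ℝ) : ℂ) *
        symCoeff R a (ξi - ηi) ((2:ℝ)⁻¹ • (freq R ξi + freq R ηi)) * fCoeff R f ηi) *
    Complex.exp (Complex.I * ((dot2 x (freq R ξi) : ℝ) : ℂ))

/-- |a|(x,ζ) = Σ_{|I| ≤ 8} |ζ|^{|I|} |∂^I_ζ a(x,ζ)|. -/
def symAbs (a : T2 → T2 → ℂ) (x ζ : T2) : ℝ :=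
  ∑ n ∈ Finset.range 9, en ζ ^ n * ‖iteratedFDeriv ℝ n (a x) ζ‖

/-- ‖a‖_{𝓛^q_m} ≤ A, stated as: ‖ |a|(·,ζ) ‖_{L^q} ≤ A (1+|ζ|)^m for all ζ ≠ 0. -/
def SymLe (R : ℝ) (m : ℝ) (q : ℝ≥0∞) (a : T2 → T2 → ℂ) (A : ℝ) : Prop :=
  ∀ ζ : T2, ζ ≠ 0 →
    eLpNorm (fun x => symAbs a x ζ) q (μbox R) ≤ ENNReal.ofReal (A * (1 + en ζ) ^ m)

def symAbsDx (a : T2 → T2 → ℂ) (x ζ : T2) : ℝ :=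
  ∑ n ∈ Finset.range 9,
    en ζ ^ n * ‖iteratedFDeriv ℝ n (fun ζ' => fderiv ℝ (fun x' => a x' ζ') x) ζ‖

/-- ‖∇_x a‖_{𝓛^q_m} ≤ A. -/
def SymDxLe (R : ℝ) (m : ℝ) (q : ℝ≥0∞) (a : T2 → T2 → ℂ) (A : ℝ) : Prop :=
  ∀ ζ : T2, ζ ≠ 0 →
    eLpNorm (fun x => symAbsDx a x ζ) q (μbox R) ≤ ENNReal.ofReal (A * (1 + en ζ) ^ m)

/-- T_f for a symbol f(x) independent of ζ. -/
def TaF (R : ℝ) (φ : T2 → ℝ) (f g : T2 → ℂ) : T2 → ℂ := Ta R φ (fun x _ => f x) g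

/-- H(f,g) = fg − T_f g − T_g f. -/
def Hbil (R : ℝ) (φ : T2 → ℝ) (f g : T2 → ℂ) : T2 → ℂ := fun x =>
  f x * g x - TaF R φ f g x - TaF R φ g f x

/-- E(a,b) = T_a T_b − T_{ab}. -/
def E2 (R : ℝ) (φ : T2 → ℝ) (a b : T2 → T2 → ℂ) (f : T2 → ℂ) : T2 → ℂ := fun x =>
  Ta R φ a (Ta R φ b f) x - Ta R φ (fun y ζ => a y ζ * b y ζ) f x

/-- E(a,b,c) = T_a T_b T_c − T_{abc}. -/
def E3 (R : ℝ) (φ : T2 → ℝ) (a b c : T2 → T2 → ℂ) (f : T2 → ℂ) : T2 → ℂ := fun x =>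
  Ta R φ a (Ta R φ b (Ta R φ c f)) x - Ta R φ (fun y ζ => a y ζ * b y ζ * c y ζ) f x

/-- T_{a_1} ⋯ T_{a_n}. -/
def TaChain (R : ℝ) (φ : T2 → ℝ) : {n : ℕ} → (Fin n → T2 → T2 → ℂ) → (T2 → ℂ) → (T2 → ℂ)
  | 0, _, f => f
  | _ + 1, a, f => Ta R φ (a 0) (TaChain R φ (fun j => a j.succ) f)

/-- E(a_1,…,a_n) = T_{a_1}⋯T_{a_n} − T_{a_1⋯a_n}. -/
def EnOp (R : ℝ) (φ : T2 → ℝ) {n : ℕ} (a : Fin n → T2 → T2 → ℂ) (f : T2 → ℂ) : T2 → ℂ :=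
  fun x => TaChain R φ a f x - Ta R φ (fun y ζ => ∏ j, a j y ζ) f x

/-- Real part of the L² inner product on the torus. -/
def ipRe (R : ℝ) (f g : T2 → ℂ) : ℝ := (∫ x in box R, f x * (starRingEnd ℂ) (g x)).re

/-- The phase Φ_{μν}(ξ₁,ξ₂) = Λ(ξ₁+ξ₂) − μΛ(ξ₁) − νΛ(ξ₂), for signs μ, ν ∈ {1,-1}. -/
def Phi (μ ν : ℝ) (ξ₁ ξ₂ : T2) : ℝ := lam (ξ₁ + ξ₂) - μ * lam ξ₁ - ν * lam ξ₂

def mA (ξ₁ ξ₂ : T2) : ℂ := ((lam (ξ₁ + ξ₂) * en ξ₁ / lam ξ₁ : ℝ) : ℂ)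
def mB (ξ₁ ξ₂ : T2) : ℂ := ((lam (ξ₁ + ξ₂) * en ξ₂ / lam ξ₂ : ℝ) : ℂ)
def mC (ξ₁ ξ₂ : T2) : ℂ := ((en (ξ₁ + ξ₂) : ℝ) : ℂ)

/-- The basic quadratic multipliers of the Euler–Poisson nonlinearity. -/
def IsBasicM (m : T2 → T2 → ℂ) : Prop := m = mA ∨ m = mB ∨ m = mC

/-- f_+ = f, f_- = conj f (for a sign μ ∈ {1,-1}). -/
def sgnFun (μ : ℝ) (f : T2 → ℂ) : T2 → ℂ :=
  if μ = 1 then f else fun x => (starRingEnd ℂ) (f x)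

/-- v_j, the j-th component of v = ∇h. -/
def vcomp (h : T2 → ℝ) (j : Fin 2) : T2 → ℝ := fun x => if j = 0 then d1 h x else d2 h x

/-- The semilinear quadratic term 𝓢 = −ΛR_j H(ρ, v_j) − (i/2)|∇|H(v_j, v_j). -/
def calS (R : ℝ) (φ : T2 → ℝ) (ρ h : T2 → ℝ) : T2 → ℂ := fun x =>
  -(∑ j : Fin 2, op R
      (fun ξ => ((lam ξ : ℝ) : ℂ) *
        (Complex.I * (((if j = (0 : Fin 2) then ξ.1 else ξ.2) : ℝ) : ℂ) * (((en ξ)⁻¹ : ℝ) : ℂ)))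
      (Hbil R φ (cf ρ) (cf (vcomp h j))) x)
  - (Complex.I / 2) * ∑ j : Fin 2, absGrad R (Hbil R φ (cf (vcomp h j)) (cf (vcomp h j))) x

/-- 𝓤 = X + i T_{√(1+ρ)} Y. -/
def calU (R : ℝ) (φ : T2 → ℝ) (ρ h : T2 → ℝ) : T2 → ℂ := fun x =>
  LamInvGrad R (cf ρ) x +
    Complex.I * Ta R φ (fun y _ => ((Real.sqrt (1 + ρ y) : ℝ) : ℂ)) (absGrad R (cf h)) x

def sqrtSym (ρ : T2 → ℝ) : T2 → T2 → ℂ := fun y _ => ((Real.sqrt (1 + ρ y) : ℝ) : ℂ)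
def sqrtm1Sym (ρ : T2 → ℝ) : T2 → T2 → ℂ := fun y _ => ((Real.sqrt (1 + ρ y) - 1 : ℝ) : ℂ)
def vdotSym (h : T2 → ℝ) : T2 → T2 → ℂ := fun y ζ => ((dot2 (grad2 h y) ζ : ℝ) : ℂ)
def lamSym2 : T2 → T2 → ℂ := fun _ ζ => ((lam ζ : ℝ) : ℂ)
def enSym2 : T2 → T2 → ℂ := fun _ ζ => ((en ζ : ℝ) : ℂ)
def zetaOverEn (j : Fin 2) : T2 → T2 → ℂ :=
  fun _ ζ => (((if j = (0 : Fin 2) then ζ.1 else ζ.2) * (en ζ)⁻¹ : ℝ) : ℂ)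
def lamZetaOverEn (j : Fin 2) : T2 → T2 → ℂ :=
  fun _ ζ => ((lam ζ * (if j = (0 : Fin 2) then ζ.1 else ζ.2) * (en ζ)⁻¹ : ℝ) : ℂ)
def enOverLam : T2 → T2 → ℂ := fun _ ζ => ((en ζ * (lam ζ)⁻¹ : ℝ) : ℂ)
def rhoSym (ρ : T2 → ℝ) : T2 → T2 → ℂ := fun y _ => ((ρ y : ℝ) : ℂ)
def vjSym (h : T2 → ℝ) (j : Fin 2) : T2 → T2 → ℂ := fun y _ => ((vcomp h j y : ℝ) : ℂ)

/-!
Let `V = ∇f / |∇f|²`, smoothly cut off where `∇f` is small, so that `∇f · V = 1` on the support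
of `g`. There `e^{iKf} = (iK)⁻¹ V · ∇ e^{iKf}`, and `L` integrations by parts give
`∫ e^{iKf} g = (-iK)^{-L} ∫ e^{iKf} P_L` with `P_0 = g` and `P_{l+1} = div (P_l V)`.
Since `y ↦ y / |y|²` is homogeneous of degree `-1`, its derivatives are bounded on `|y| ≥ 1`, and
Faà di Bruno turns the hypotheses on `f` into `ε^m |∇^m V| ≲ 1` on the support of `g`. The Leibniz
rule then gives `ε^L |P_L| ≲ ∑_{j ≤ L} ε^j |∇^j g|` pointwise, and integrating yields the estimate.
-/

open Filter
open scoped ContDiff Topology Nat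

section SmoothInversion

def smoothInv (t : ℝ) : ℝ := smoothTransition (8 * t - 1) / t

lemma smoothInv_of_le {t : ℝ} (ht : 4⁻¹ ≤ t) : smoothInv t = t⁻¹ := by
  rw [smoothInv, smoothTransition.one_of_one_le (by linarith), one_div]

lemma contDiff_smoothInv : ContDiff ℝ ∞ smoothInv := by
  refine contDiff_iff_contDiffAt.2 fun t => ?_
  rcases lt_or_ge t 8⁻¹ with ht | ht
  · have hzero : smoothInv =ᶠ[𝓝 t] fun _ => 0 := by
      filter_upwards [Iio_mem_nhds ht] with s hs
      rw [smoothInv, smoothTransition.zero_of_nonpos (by linarith [hs.out]), zero_div]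
    exact contDiffAt_const.congr_of_eventuallyEq hzero
  · exact (smoothTransition.contDiffAt.comp t (by fun_prop)).div contDiffAt_id (by positivity)

variable {E : Type*} [NormedAddCommGroup E] [InnerProductSpace ℝ E]

def smoothInversion (y : E) : E := smoothInv (‖y‖ ^ 2) • y

lemma smoothInversion_of_le {y : E} (hy : 2⁻¹ ≤ ‖y‖) : smoothInversion y = (‖y‖ ^ 2)⁻¹ • y := by
  rw [smoothInversion, smoothInv_of_le (by nlinarith)]

lemma contDiff_smoothInversion : ContDiff ℝ ∞ (smoothInversion : E → E) :=
  (contDiff_smoothInv.comp (contDiff_norm_sq ℝ)).smul contDiff_id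

lemma smoothInversion_smul {a : ℝ} (ha : 1 ≤ a) {w : E} (hw : 2⁻¹ ≤ ‖w‖) :
    smoothInversion (a • w) = a⁻¹ • smoothInversion w := by
  have ha₀ : a ≠ 0 := by positivity
  have hw₀ : ‖w‖ ≠ 0 := by positivity
  have hw' : 2⁻¹ ≤ ‖a • w‖ := by
    rw [norm_smul, Real.norm_of_nonneg (by linarith)]; nlinarith
  rw [smoothInversion_of_le hw, smoothInversion_of_le hw', norm_smul,
    Real.norm_of_nonneg (by linarith), smul_smul, smul_smul]
  congr 1
  field_simp

variable [FiniteDimensional ℝ E]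

lemma exists_norm_iteratedFDeriv_smoothInversion_le (m : ℕ) :
    ∃ C, ∀ y : E, 1 ≤ ‖y‖ → ‖iteratedFDeriv ℝ m smoothInversion y‖ ≤ C := by
  obtain ⟨C, hC⟩ := (isCompact_sphere (0 : E) 1).exists_bound_of_continuousOn
    (contDiff_smoothInversion.continuous_iteratedFDeriv (m := m) (mod_cast le_top)).continuousOn
  refine ⟨C, fun y hy => ?_⟩
  set a := ‖y‖
  set z := a⁻¹ • y
  have ha : 0 < a := by positivity
  have hz : ‖z‖ = 1 := by simp [z, norm_smul, a, inv_mul_cancel₀ ha.ne']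
  have hyz : a • z = y := by simp [z, smul_smul, mul_inv_cancel₀ ha.ne']
  -- rescaling `y` to the unit sphere multiplies the `m`-th derivative by `a ^ (-m-1)`
  have hnear : (fun w => smoothInversion (a • w)) =ᶠ[𝓝 z] fun w => a⁻¹ • smoothInversion w := by
    filter_upwards [(isOpen_lt continuous_const continuous_norm).mem_nhds
      (show (2⁻¹ : ℝ) < ‖z‖ by rw [hz]; norm_num)] with w hw
    exact smoothInversion_smul hy hw.le
  have key : a ^ m • iteratedFDeriv ℝ m smoothInversion y =
      a⁻¹ • iteratedFDeriv ℝ m smoothInversion z := by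
    rw [← hyz, ← congrFun (iteratedFDeriv_comp_const_smul a
        (contDiff_smoothInversion.of_le (mod_cast le_top))) z,
      (hnear.iteratedFDeriv ℝ m).eq_of_nhds,
      iteratedFDeriv_const_smul_apply'
        (contDiff_smoothInversion.contDiffAt.of_le (mod_cast le_top))]
  have hnorm := congrArg norm key
  rw [norm_smul, norm_smul, Real.norm_of_nonneg (by positivity),
    Real.norm_of_nonneg (by positivity)] at hnorm
  calc ‖iteratedFDeriv ℝ m smoothInversion y‖
      ≤ a ^ m * ‖iteratedFDeriv ℝ m smoothInversion y‖ :=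
        le_mul_of_one_le_left (norm_nonneg _) (one_le_pow₀ hy)
    _ = a⁻¹ * ‖iteratedFDeriv ℝ m smoothInversion z‖ := hnorm
    _ ≤ C := (mul_le_of_le_one_left (norm_nonneg _) (inv_le_one_of_one_le₀ hy)).trans
        (hC z (by simpa using hz))

lemma eventually_norm_iteratedFDeriv_smoothInversion_le (n : ℕ) :
    ∀ᶠ C in atTop, ∀ m ≤ n, ∀ y : E, 1 ≤ ‖y‖ → ‖iteratedFDeriv ℝ m smoothInversion y‖ ≤ C :=
  (Set.finite_le_nat n).eventually_all.2 fun m _ =>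
    let ⟨C, hC⟩ := exists_norm_iteratedFDeriv_smoothInversion_le (E := E) m
    (eventually_ge_atTop C).mono fun _ hC' y hy => (hC y hy).trans hC'

end SmoothInversion

section Gradient

variable {E : Type*} [NormedAddCommGroup E] [InnerProductSpace ℝ E] [CompleteSpace E]

lemma gradient_eq_comp (f : E → ℝ) :
    gradient f = (InnerProductSpace.toDual ℝ E).symm ∘ fderiv ℝ f := rfl

lemma contDiff_gradient {n : ℕ∞ω} {f : E → ℝ} (hf : ContDiff ℝ (n + 1) f) :
    ContDiff ℝ n (gradient f) :=
  (InnerProductSpace.toDual ℝ E).symm.contDiff.comp (hf.fderiv_right le_rfl)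

lemma norm_gradient (f : E → ℝ) (x : E) : ‖gradient f x‖ = ‖fderiv ℝ f x‖ :=
  (InnerProductSpace.toDual ℝ E).symm.norm_map _

lemma norm_iteratedFDeriv_gradient (f : E → ℝ) (n : ℕ) (x : E) :
    ‖iteratedFDeriv ℝ n (gradient f) x‖ = ‖iteratedFDeriv ℝ (n + 1) f x‖ := by
  rw [gradient_eq_comp, LinearIsometryEquiv.norm_iteratedFDeriv_comp_left,
    norm_iteratedFDeriv_fderiv]

lemma fderiv_apply_smoothInversion_gradient {f : E → ℝ} {x : E} (hx : 2⁻¹ ≤ ‖fderiv ℝ f x‖) :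
    fderiv ℝ f x (smoothInversion (gradient f x)) = 1 := by
  rw [← norm_gradient] at hx
  have hne : ‖gradient f x‖ ^ 2 ≠ 0 := by positivity
  rw [smoothInversion_of_le hx, map_smul, smul_eq_mul, ← InnerProductSpace.toDual_symm_apply]
  change _ * inner ℝ (gradient f x) (gradient f x) = 1
  rw [real_inner_self_eq_norm_sq, inv_mul_cancel₀ hne]

theorem pow_mul_norm_iteratedFDeriv_smoothInversion_gradient_le {f : E → ℝ}
    (hf : ContDiff ℝ ∞ f) {x : E} {ε A C : ℝ} {n : ℕ} (hε : 0 < ε) (hA : 1 ≤ A) (hC₀ : 0 ≤ C)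
    (hC : ∀ m ≤ n, ∀ y : E, 1 ≤ ‖y‖ → ‖iteratedFDeriv ℝ m smoothInversion y‖ ≤ C)
    (hfx : 1 ≤ ‖fderiv ℝ f x‖)
    (hfx' : ∀ i, 2 ≤ i → i ≤ n + 1 → ‖iteratedFDeriv ℝ i f x‖ ≤ A * ε ^ (1 - (i : ℤ)))
    {m : ℕ} (hm : m ≤ n) :
    ε ^ m * ‖iteratedFDeriv ℝ m (smoothInversion ∘ gradient f) x‖ ≤ n ! * C * A ^ n := by
  have hD : ∀ i, 1 ≤ i → i ≤ m → ‖iteratedFDeriv ℝ i (gradient f) x‖ ≤ (A / ε) ^ i :=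
    fun i hi him => by
      have h := hfx' (i + 1) (by omega) (by omega)
      rw [show (1 : ℤ) - (i + 1 : ℕ) = -(i : ℤ) by push_cast; ring, zpow_neg, zpow_natCast] at h
      rw [norm_iteratedFDeriv_gradient, div_pow, div_eq_mul_inv]
      exact h.trans (by gcongr; exact le_self_pow₀ hA (by omega))
  have h := norm_iteratedFDeriv_comp_le contDiff_smoothInversion
    (contDiff_gradient (hf.of_le le_rfl)) (mod_cast le_top) x
    (fun i hi => hC i (hi.trans hm) _ ((norm_gradient f x).symm ▸ hfx)) hD
  calc ε ^ m * ‖iteratedFDeriv ℝ m (smoothInversion ∘ gradient f) x‖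
      ≤ ε ^ m * (m ! * C * (A / ε) ^ m) := by gcongr
    _ = m ! * C * A ^ m := by rw [div_pow]; field_simp
    _ ≤ n ! * C * A ^ n := by gcongr

end Gradient

section Divergence

variable {E : Type*} [NormedAddCommGroup E] [NormedSpace ℝ E] [FiniteDimensional ℝ E]

variable (E) in
def traceCLM : (E →L[ℝ] E) →L[ℝ] ℝ :=
  LinearMap.toContinuousLinearMap (LinearMap.trace ℝ E ∘ₗ ContinuousLinearMap.coeLM ℝ)

def divergence (W : E → E) (x : E) : ℝ := traceCLM E (fderiv ℝ W x)

lemma divergence_eq_sum {ι : Type*} [Fintype ι] [DecidableEq ι] (b : Module.Basis ι ℝ E)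
    (W : E → E) (x : E) : divergence W x = ∑ i, b.coord i (fderiv ℝ W x (b i)) := by
  simp [divergence, traceCLM, LinearMap.trace_eq_matrix_trace ℝ b, Matrix.trace,
    LinearMap.toMatrix_apply]

lemma contDiff_divergence {n : ℕ∞ω} {W : E → E} (hW : ContDiff ℝ (n + 1) W) :
    ContDiff ℝ n (divergence W) :=
  (traceCLM E).contDiff.comp (hW.fderiv_right le_rfl)

lemma tsupport_divergence_subset (W : E → E) : tsupport (divergence W) ⊆ tsupport W := by
  refine (closure_mono (Function.support_subset_iff'.2 fun x hx => ?_)).trans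
    (tsupport_fderiv_subset ℝ)
  rw [Function.notMem_support] at hx
  simp [divergence, hx]

lemma norm_iteratedFDeriv_divergence_le {W : E → E} {m : ℕ} (hW : ContDiff ℝ (m + 1) W)
    (x : E) :
    ‖iteratedFDeriv ℝ m (divergence W) x‖ ≤ ‖traceCLM E‖ * ‖iteratedFDeriv ℝ (m + 1) W x‖ := by
  rw [← norm_iteratedFDeriv_fderiv]
  exact (traceCLM E).norm_iteratedFDeriv_comp_left (hW.fderiv_right le_rfl).contDiffAt le_rfl

lemma norm_iteratedFDeriv_divergence_smul_le {p : E → ℝ} {V : E → E} {m : ℕ}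
    (hp : ContDiff ℝ (m + 1) p) (hV : ContDiff ℝ (m + 1) V) (x : E) :
    ‖iteratedFDeriv ℝ m (divergence fun y => p y • V y) x‖ ≤
      ‖traceCLM E‖ * ∑ i ∈ Finset.range (m + 2), ((m + 1).choose i : ℝ) *
        ‖iteratedFDeriv ℝ i p x‖ * ‖iteratedFDeriv ℝ (m + 1 - i) V x‖ :=
  (norm_iteratedFDeriv_divergence_le (hp.smul hV) x).trans <| by
    gcongr
    exact_mod_cast norm_iteratedFDeriv_smul_le hp hV x le_rfl

def divIter (V : E → E) (g : E → ℝ) : ℕ → E → ℝ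
  | 0 => g
  | l + 1 => divergence fun y => divIter V g l y • V y

variable {V : E → E} {g : E → ℝ}

lemma contDiff_divIter (hV : ContDiff ℝ ∞ V) (hg : ContDiff ℝ ∞ g) (l : ℕ) :
    ContDiff ℝ ∞ (divIter V g l) := by
  induction l with
  | zero => exact hg
  | succ l ih => exact contDiff_divergence ((ih.smul hV).of_le le_rfl)

lemma tsupport_divIter_subset (l : ℕ) : tsupport (divIter V g l) ⊆ tsupport g := by
  induction l with
  | zero => exact subset_rfl
  | succ l ih =>
    exact (tsupport_divergence_subset _).trans ((tsupport_smul_subset_left _ _).trans ih)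

lemma hasCompactSupport_divIter (hgc : HasCompactSupport g) (l : ℕ) :
    HasCompactSupport (divIter V g l) :=
  hgc.mono' ((subset_tsupport _).trans (tsupport_divIter_subset l))

lemma pow_mul_norm_iteratedFDeriv_divergence_smul_le {p : E → ℝ} {V : E → E} {x : E}
    {ε D B : ℝ} {k m : ℕ} (hε : 0 ≤ ε) (hp : ContDiff ℝ (m + 1) p) (hV : ContDiff ℝ (m + 1) V)
    (hpD : ∀ i ≤ m + 1, ε ^ (k + i) * ‖iteratedFDeriv ℝ i p x‖ ≤ D)
    (hVB : ∀ i ≤ m + 1, ε ^ i * ‖iteratedFDeriv ℝ i V x‖ ≤ B) :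
    ε ^ (k + 1 + m) * ‖iteratedFDeriv ℝ m (divergence fun y => p y • V y) x‖ ≤
      ‖traceCLM E‖ * 2 ^ (m + 1) * D * B := by
  have hD : 0 ≤ D := (hpD 0 (Nat.zero_le _)).trans' (by positivity)
  have hB : 0 ≤ B := (hVB 0 (Nat.zero_le _)).trans' (by positivity)
  calc ε ^ (k + 1 + m) * ‖iteratedFDeriv ℝ m (divergence fun y => p y • V y) x‖
      ≤ ε ^ (k + 1 + m) * (‖traceCLM E‖ * ∑ i ∈ Finset.range (m + 2), ((m + 1).choose i : ℝ) *
          ‖iteratedFDeriv ℝ i p x‖ * ‖iteratedFDeriv ℝ (m + 1 - i) V x‖) := by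
        gcongr
        exact norm_iteratedFDeriv_divergence_smul_le hp hV x
    _ = ‖traceCLM E‖ * ∑ i ∈ Finset.range (m + 2), ((m + 1).choose i : ℝ) *
          ((ε ^ (k + i) * ‖iteratedFDeriv ℝ i p x‖) *
            (ε ^ (m + 1 - i) * ‖iteratedFDeriv ℝ (m + 1 - i) V x‖)) := by
        rw [mul_left_comm, Finset.mul_sum]
        refine congrArg _ (Finset.sum_congr rfl fun i hi => ?_)
        rw [show k + 1 + m = (k + i) + (m + 1 - i) by grind, pow_add]
        ring
    _ ≤ ‖traceCLM E‖ * ∑ i ∈ Finset.range (m + 2), ((m + 1).choose i : ℝ) * (D * B) := by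
        gcongr with i hi
        · exact hpD i (by grind)
        · exact hVB _ (by omega)
    _ = ‖traceCLM E‖ * 2 ^ (m + 1) * D * B := by
        rw [← Finset.sum_mul, ← Nat.cast_sum, Nat.sum_range_choose]
        push_cast
        ring

theorem pow_mul_norm_iteratedFDeriv_divIter_le {ε B : ℝ} {L : ℕ} (hε : 0 ≤ ε)
    (hV : ContDiff ℝ ∞ V) (hg : ContDiff ℝ ∞ g)
    (hVB : ∀ m ≤ L, ∀ x ∈ tsupport g, ε ^ m * ‖iteratedFDeriv ℝ m V x‖ ≤ B)
    {x : E} (hx : x ∈ tsupport g) (l : ℕ) {m : ℕ} (hlm : l + m ≤ L) :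
    ε ^ (l + m) * ‖iteratedFDeriv ℝ m (divIter V g l) x‖ ≤
      (2 ^ L * ‖traceCLM E‖ * B) ^ l *
        ∑ j ∈ Finset.range (l + m + 1), ε ^ j * ‖iteratedFDeriv ℝ j g x‖ := by
  induction l generalizing m with
  | zero =>
    simpa [divIter] using Finset.single_le_sum (f := fun j => ε ^ j * ‖iteratedFDeriv ℝ j g x‖)
      (fun j _ => by positivity) (Finset.self_mem_range_succ m)
  | succ l ih =>
    set S := ∑ j ∈ Finset.range (l + 1 + m + 1), ε ^ j * ‖iteratedFDeriv ℝ j g x‖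
    have hB : 0 ≤ B := (hVB 0 (Nat.zero_le _) x hx).trans' (by positivity)
    have hstep := pow_mul_norm_iteratedFDeriv_divergence_smul_le (k := l) (m := m)
      (D := _ ^ l * S) hε
      ((contDiff_divIter hV hg l).of_le (mod_cast le_top)) (hV.of_le (mod_cast le_top))
      (fun i hi => (ih (m := i) (by omega)).trans <| mul_le_mul_of_nonneg_left
        (Finset.sum_le_sum_of_subset_of_nonneg (Finset.range_subset_range.2 (by omega))
          fun j _ _ => by positivity) (by positivity))
      fun i hi => hVB i (by omega) x hx
    refine hstep.trans ?_
    calc ‖traceCLM E‖ * 2 ^ (m + 1) * ((2 ^ L * ‖traceCLM E‖ * B) ^ l * S) * B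
        ≤ ‖traceCLM E‖ * 2 ^ L * ((2 ^ L * ‖traceCLM E‖ * B) ^ l * S) * B := by
          gcongr
          · exact one_le_two
          · omega
      _ = (2 ^ L * ‖traceCLM E‖ * B) ^ (l + 1) * S := by ring

end Divergence

section Phase

variable {E : Type*} [NormedAddCommGroup E] [NormedSpace ℝ E]

lemma fderiv_exp_phase_apply {K : ℝ} {f : E → ℝ} {x : E} (hf : DifferentiableAt ℝ f x) (v : E) :
    fderiv ℝ (fun y => Complex.exp (Complex.I * ((K * f y : ℝ) : ℂ))) x v =
      Complex.exp (Complex.I * ((K * f x : ℝ) : ℂ)) * (Complex.I * K * fderiv ℝ f x v) := by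
  have h : HasFDerivAt (fun y => ((K * f y : ℝ) : ℂ))
      (Complex.ofRealCLM.comp (K • fderiv ℝ f x)) x :=
    Complex.ofRealCLM.hasFDerivAt.comp x (hf.hasFDerivAt.const_mul K)
  rw [((h.const_mul Complex.I).cexp).fderiv]
  simp
  ring

end Phase

section Integration

variable {E : Type*} [MeasurableSpace E] (μ : Measure E)

def oscillatoryIntegral (K : ℝ) (f p : E → ℝ) : ℂ :=
  ∫ x, Complex.exp (Complex.I * ((K * f x : ℝ) : ℂ)) * ((p x : ℝ) : ℂ) ∂μ

lemma norm_oscillatoryIntegral_le (K : ℝ) (f p : E → ℝ) :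
    ‖oscillatoryIntegral μ K f p‖ ≤ ∫ x, |p x| ∂μ := by
  refine (norm_integral_le_integral_norm _).trans_eq (integral_congr_ae (.of_forall fun x => ?_))
  change ‖_ * _‖ = _
  rw [norm_mul, mul_comm Complex.I, Complex.norm_exp_ofReal_mul_I, Complex.norm_real,
    Real.norm_eq_abs, one_mul]

variable [NormedAddCommGroup E] [NormedSpace ℝ E] [BorelSpace E] {μ}
  {F : Type*} [NormedAddCommGroup F] [NormedSpace ℝ F]

section FiniteOnCompacts

variable [IsFiniteMeasureOnCompacts μ]

lemma integrable_fderiv_apply_smul {w : E → ℝ} {u : E → F} (hw : ContDiff ℝ 1 w)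
    (hwc : HasCompactSupport w) (hu : Continuous u) (v : E) :
    Integrable (fun x => fderiv ℝ w x v • u x) μ :=
  (((hw.continuous_fderiv one_ne_zero).clm_apply continuous_const).smul hu
    ).integrable_of_hasCompactSupport (hwc.fderiv_apply (𝕜 := ℝ) v).smul_right

lemma integrable_smul_fderiv_apply {w : E → ℝ} {u : E → F} (hw : Continuous w)
    (hwc : HasCompactSupport w) (hu : ContDiff ℝ 1 u) (v : E) :
    Integrable (fun x => w x • fderiv ℝ u x v) μ :=
  (hw.smul ((hu.continuous_fderiv one_ne_zero).clm_apply continuous_const)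
    ).integrable_of_hasCompactSupport hwc.smul_right

variable [FiniteDimensional ℝ E] {V : E → E} {g : E → ℝ}

theorem integral_abs_divIter_le {ε B : ℝ} {L : ℕ} (hε : 0 < ε) (hV : ContDiff ℝ ∞ V)
    (hg : ContDiff ℝ ∞ g) (hgc : HasCompactSupport g)
    (hVB : ∀ m ≤ L, ∀ x ∈ tsupport g, ε ^ m * ‖iteratedFDeriv ℝ m V x‖ ≤ B) :
    ∫ x, |divIter V g L x| ∂μ ≤ (ε ^ L)⁻¹ * (2 ^ L * ‖traceCLM E‖ * B) ^ L *
      ∑ j ∈ Finset.range (L + 1), ε ^ j * ∫ x, ‖iteratedFDeriv ℝ j g x‖ ∂μ := by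
  have hint : ∀ j, Integrable (fun x => ‖iteratedFDeriv ℝ j g x‖) μ := fun j =>
    (hg.continuous_iteratedFDeriv (mod_cast le_top)).norm.integrable_of_hasCompactSupport
      (hgc.iteratedFDeriv j).norm
  have hpt : ∀ x, |divIter V g L x| ≤ (ε ^ L)⁻¹ * (2 ^ L * ‖traceCLM E‖ * B) ^ L *
      ∑ j ∈ Finset.range (L + 1), ε ^ j * ‖iteratedFDeriv ℝ j g x‖ := fun x => by
    by_cases hx : x ∈ tsupport g
    · have h := pow_mul_norm_iteratedFDeriv_divIter_le hε.le hV hg hVB hx L (m := 0) le_rfl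
      rw [norm_iteratedFDeriv_zero, Real.norm_eq_abs, add_zero] at h
      rwa [mul_assoc, le_inv_mul_iff₀ (by positivity)]
    · have hg0 : ∀ j, iteratedFDeriv ℝ j g x = 0 := fun j =>
        image_eq_zero_of_notMem_tsupport fun h => hx (tsupport_iteratedFDeriv_subset j h)
      simp [image_eq_zero_of_notMem_tsupport fun h => hx (tsupport_divIter_subset L h), hg0]
  have hP := (contDiff_divIter hV hg L).continuous.abs.integrable_of_hasCompactSupport (μ := μ)
    (hasCompactSupport_divIter hgc L).abs
  refine (integral_mono hP ?_ hpt).trans_eq ?_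
  · exact (integrable_finsetSum _ fun j _ => (hint j).const_mul _).const_mul _
  · rw [integral_const_mul, integral_finsetSum _ fun j _ => (hint j).const_mul _]
    simp only [integral_const_mul]

end FiniteOnCompacts

variable [FiniteDimensional ℝ E] [μ.IsAddHaarMeasure]

theorem integral_smul_fderiv_eq_neg_of_hasCompactSupport {w : E → ℝ} {u : E → F}
    (hw : ContDiff ℝ 1 w) (hwc : HasCompactSupport w) (hu : ContDiff ℝ 1 u) (v : E) :
    ∫ x, w x • fderiv ℝ u x v ∂μ = -∫ x, fderiv ℝ w x v • u x ∂μ :=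
  integral_smul_fderiv_eq_neg_fderiv_smul_of_integrable
    (integrable_fderiv_apply_smul hw hwc hu.continuous v)
    (integrable_smul_fderiv_apply hw.continuous hwc hu v)
    ((hw.continuous.smul hu.continuous).integrable_of_hasCompactSupport hwc.smul_right)
    (fun x _ => hw.differentiable one_ne_zero x) (fun x _ => hu.differentiable one_ne_zero x)

theorem integral_divergence_smul_eq_neg {W : E → E} {u : E → F} (hW : ContDiff ℝ 1 W)
    (hWc : HasCompactSupport W) (hu : ContDiff ℝ 1 u) :
    ∫ x, divergence W x • u x ∂μ = -∫ x, fderiv ℝ u x (W x) ∂μ := by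
  classical
  let b := Module.finBasis ℝ E
  let w : Fin _ → E → ℝ := fun i x => b.coord i (W x)
  have hw : ∀ i, ContDiff ℝ 1 (w i) := fun i =>
    (LinearMap.toContinuousLinearMap (b.coord i)).contDiff.comp hW
  have hwc : ∀ i, HasCompactSupport (w i) := fun i => hWc.comp_left (map_zero _)
  have hdw : ∀ i x, fderiv ℝ (w i) x (b i) = b.coord i (fderiv ℝ W x (b i)) := fun i x => by
    change fderiv ℝ (LinearMap.toContinuousLinearMap (b.coord i) ∘ W) x (b i) = _
    rw [((LinearMap.toContinuousLinearMap (b.coord i)).hasFDerivAt.comp x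
      (hW.differentiable one_ne_zero x).hasFDerivAt).fderiv]
    rfl
  have hdiv : ∀ x, divergence W x • u x = ∑ i, fderiv ℝ (w i) x (b i) • u x := fun x => by
    simp only [divergence_eq_sum b, hdw, Finset.sum_smul]
  have hdu : ∀ x, fderiv ℝ u x (W x) = ∑ i, w i x • fderiv ℝ u x (b i) := fun x => by
    conv_lhs => rw [← b.sum_repr (W x)]
    simp only [map_sum, map_smul, w, Module.Basis.coord_apply]
  simp only [hdiv, hdu]
  rw [integral_finsetSum _ fun i _ => integrable_fderiv_apply_smul (hw i) (hwc i) hu.continuous _,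
    integral_finsetSum _ fun i _ => integrable_smul_fderiv_apply (hw i).continuous (hwc i) hu _]
  simp [integral_smul_fderiv_eq_neg_of_hasCompactSupport (μ := μ) (hw _) (hwc _) hu]

variable {V : E → E} {g : E → ℝ}

theorem oscillatoryIntegral_divergence_smul {K : ℝ} {f p : E → ℝ} (hf : ContDiff ℝ 1 f)
    (hp : ContDiff ℝ 1 p) (hpc : HasCompactSupport p) (hV : ContDiff ℝ 1 V)
    (hfV : ∀ x ∈ tsupport p, fderiv ℝ f x (V x) = 1) :
    oscillatoryIntegral μ K f (divergence fun y => p y • V y) =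
      -(Complex.I * K * oscillatoryIntegral μ K f p) := by
  set u : E → ℂ := fun x => Complex.exp (Complex.I * ((K * f x : ℝ) : ℂ))
  have hu : ContDiff ℝ 1 u := Complex.contDiff_exp.comp
    (contDiff_const.mul (Complex.ofRealCLM.contDiff.comp (contDiff_const.mul hf)))
  have hDu : ∀ x v, fderiv ℝ u x v = u x * (Complex.I * K * fderiv ℝ f x v) := fun x v =>
    fderiv_exp_phase_apply (hf.differentiable one_ne_zero x) v
  have hW : ContDiff ℝ 1 fun y => p y • V y := hp.smul hV
  have hDuW : ∀ x, fderiv ℝ u x (p x • V x) = Complex.I * K * (u x * (p x : ℂ)) := fun x => by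
    by_cases hx : p x = 0
    · simp [hx]
    · rw [map_smul, hDu, hfV x (subset_tsupport _ hx), Complex.real_smul, Complex.ofReal_one]
      ring
  have key := integral_divergence_smul_eq_neg (μ := μ) hW hpc.smul_right hu
  simp only [hDuW, integral_const_mul] at key
  rw [oscillatoryIntegral, oscillatoryIntegral, ← key]
  exact integral_congr_ae (.of_forall fun x => by simp only [u, Complex.real_smul, mul_comm])

theorem norm_oscillatoryIntegral_eq_divIter {K : ℝ} (hK : 0 < K) {f : E → ℝ}
    (hf : ContDiff ℝ 1 f) (hV : ContDiff ℝ ∞ V) (hg : ContDiff ℝ ∞ g) (hgc : HasCompactSupport g)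
    (hfV : ∀ x ∈ tsupport g, fderiv ℝ f x (V x) = 1) (l : ℕ) :
    ‖oscillatoryIntegral μ K f g‖ = (K ^ l)⁻¹ * ‖oscillatoryIntegral μ K f (divIter V g l)‖ := by
  induction l with
  | zero => simp [divIter]
  | succ l ih =>
    have hstep := oscillatoryIntegral_divergence_smul (μ := μ) (K := K) hf
      ((contDiff_divIter hV hg l).of_le (mod_cast le_top))
      (hasCompactSupport_divIter hgc l)
      (hV.of_le (mod_cast le_top)) fun x hx => hfV x (tsupport_divIter_subset l hx)
    change _ = _ * ‖oscillatoryIntegral μ K f (divergence _)‖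
    rw [ih, hstep, norm_neg, norm_mul, norm_mul, Complex.norm_I, Complex.norm_real,
      Real.norm_of_nonneg hK.le, pow_succ, mul_inv]
    field_simp

end Integration

theorem nonstationary_phase_general (d : ℕ) (L : ℕ) (Cf : ℕ → ℝ) :
    ∃ C' : ℝ, 0 < C' ∧
    ∀ K ε : ℝ, 0 < ε → ε ≤ 1 → 1/ε ≤ K →
    ∀ f g : EuclideanSpace ℝ (Fin d) → ℝ,
      ContDiff ℝ (⊤ : ℕ∞) f → ContDiff ℝ (⊤ : ℕ∞) g → HasCompactSupport g →
      (∀ ξ ∈ tsupport g, 1 ≤ ‖fderiv ℝ f ξ‖) →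
      (∀ L' : ℕ, 2 ≤ L' → ∀ ξ ∈ tsupport g,
        ‖iteratedFDeriv ℝ L' f ξ‖ ≤ Cf L' * ε ^ (1 - (L' : ℤ))) →
      ‖∫ ξ, Complex.exp (Complex.I * ((K * f ξ : ℝ) : ℂ)) * ((g ξ : ℝ) : ℂ)‖ ≤
        C' * (K * ε) ^ (-(L : ℤ)) *
          ∑ l ∈ Finset.range (L + 1), ε ^ l * ∫ ξ, ‖iteratedFDeriv ℝ l g ξ‖ := by
  obtain ⟨C, hC, hC₀⟩ := ((eventually_norm_iteratedFDeriv_smoothInversion_le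
    (E := EuclideanSpace ℝ (Fin d)) L).and (eventually_ge_atTop 0)).exists
  obtain ⟨A, hA, hA₁⟩ := (((Set.finite_le_nat (L + 1)).eventually_all.2
    fun i _ => eventually_ge_atTop (Cf i)).and (eventually_ge_atTop 1)).exists
  set c := 2 ^ L * ‖traceCLM (EuclideanSpace ℝ (Fin d))‖ * (L ! * C * A ^ L)
  refine ⟨c ^ L + 1, by positivity, fun K ε hε _ hK f g hf hg hgc hf₁ hfL => ?_⟩
  set V := smoothInversion ∘ gradient f
  have hV : ContDiff ℝ ∞ V := contDiff_smoothInversion.comp (contDiff_gradient (hf.of_le le_rfl))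
  have hfV : ∀ x ∈ tsupport g, fderiv ℝ f x (V x) = 1 := fun x hx =>
    fderiv_apply_smoothInversion_gradient ((by norm_num : (2⁻¹ : ℝ) ≤ 1).trans (hf₁ x hx))
  have hVB : ∀ m ≤ L, ∀ x ∈ tsupport g, ε ^ m * ‖iteratedFDeriv ℝ m V x‖ ≤ L ! * C * A ^ L :=
    fun m hm x hx => pow_mul_norm_iteratedFDeriv_smoothInversion_gradient_le hf hε hA₁ hC₀ hC
      (hf₁ x hx) (fun i hi hiL => (hfL i hi x hx).trans (by gcongr; exact hA i hiL)) hm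
  have hK : 0 < K := (one_div_pos.2 hε).trans_le hK
  change ‖oscillatoryIntegral volume K f g‖ ≤ _
  rw [norm_oscillatoryIntegral_eq_divIter hK (hf.of_le (mod_cast le_top)) hV hg hgc hfV L]
  refine (mul_le_mul_of_nonneg_left ((norm_oscillatoryIntegral_le _ _ _ _).trans
    (integral_abs_divIter_le hε hV hg hgc hVB)) (by positivity)).trans ?_
  rw [zpow_neg, zpow_natCast, mul_pow K ε L, mul_inv (K ^ L)]
  calc _ = c ^ L * ((K ^ L)⁻¹ * (ε ^ L)⁻¹) *
        ∑ l ∈ Finset.range (L + 1), ε ^ l * ∫ ξ, ‖iteratedFDeriv ℝ l g ξ‖ := by ring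
    _ ≤ _ := by gcongr; linarith

/-- Lemma 6.1 / `int-part`: non-stationary phase:
`|∫ e^{iKf} g| ≲_{d,L} (Kε)^{-L} Σ_{l≤L} ε^l ‖∇^l g‖_{L¹}`. -/
theorem nonstationary_phase (d : ℕ) (hd : 1 ≤ d) (L : ℕ) (hL : 1 ≤ L) (Cf : ℕ → ℝ) :
    ∃ C' : ℝ, 0 < C' ∧
    ∀ K ε : ℝ, 0 < ε → ε ≤ 1 → 1/ε ≤ K →
    ∀ f g : EuclideanSpace ℝ (Fin d) → ℝ,
      ContDiff ℝ (⊤ : ℕ∞) f → ContDiff ℝ (⊤ : ℕ∞) g → HasCompactSupport g →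
      (∀ ξ ∈ tsupport g, 1 ≤ ‖fderiv ℝ f ξ‖) →
      (∀ L' : ℕ, 2 ≤ L' → ∀ ξ ∈ tsupport g,
        ‖iteratedFDeriv ℝ L' f ξ‖ ≤ Cf L' * ε ^ (1 - (L' : ℤ))) →
      ‖∫ ξ, Complex.exp (Complex.I * ((K * f ξ : ℝ) : ℂ)) * ((g ξ : ℝ) : ℂ)‖ ≤
        C' * (K * ε) ^ (-(L : ℤ)) *
          ∑ l ∈ Finset.range (L + 1), ε ^ l * ∫ ξ, ‖iteratedFDeriv ℝ l g ξ‖ :=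
  nonstationary_phase_general d L Cf

end EP
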